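/- arXiv:2212.09521 — 3 statements merged into one kernel-verified Lean document; each statement's English description precedes it below -/
import Mathlib

section
/- For all nonnegative reals n₁, n₂, n₃, n₄ and λ ∈ [0,1) (that is, 0 ≤ λ < 1), if n₂(1+λ) − n₄(1−λ) ≥ −λ(n₁+n₃) and n₁+n₃+n₂√2 > 0, then ((n₁+n₃)√5 + (n₂+2n₄)√2)/((n₁+n₃) + n₂√2) ≤ (3+λ)/(1−λ). -/
theorem stmt_5 (n₁ n₂ n₃ n₄ lam : ℝ)
    (h₁ : 0 ≤ n₁) (h₂ : 0 ≤ n₂) (h₃ : 0 ≤ n₃) (h₄ : 0 ≤ n₄)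
    (hl0 : 0 ≤ lam) (hl1 : lam ≤ 1)
    (hmaj : n₂ * (1 + lam) - n₄ * (1 - lam) ≥ -lam * (n₁ + n₃))
    (hden : n₁ + n₃ + n₂ * Real.sqrt 2 > 0) (hlt : lam < 1) :
    ((n₁ + n₃) * Real.sqrt 5 + (n₂ + 2 * n₄) * Real.sqrt 2) /
      ((n₁ + n₃) + n₂ * Real.sqrt 2) ≤ (3 + lam) / (1 - lam) := by
  have s2 := Real.sq_sqrt (by norm_num : (2:ℝ) ≥ 0).le
  have s5 := Real.sq_sqrt (by norm_num : (5:ℝ) ≥ 0).le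
  have h2l : (1.4:ℝ) ≤ Real.sqrt 2 := by
    rw [show (1.4:ℝ) = Real.sqrt (1.4^2) by rw [Real.sqrt_sq]; norm_num]
    exact Real.sqrt_le_sqrt (by norm_num)
  have h2u : Real.sqrt 2 ≤ 1.5 := by
    rw [show (1.5:ℝ) = Real.sqrt (1.5^2) by rw [Real.sqrt_sq]; norm_num]
    exact Real.sqrt_le_sqrt (by norm_num)
  have h5u : Real.sqrt 5 ≤ 2.3 := by
    rw [show (2.3:ℝ) = Real.sqrt (2.3^2) by rw [Real.sqrt_sq]; norm_num]
    exact Real.sqrt_le_sqrt (by norm_num)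
  have h5l : (2.2:ℝ) ≤ Real.sqrt 5 := by
    rw [show (2.2:ℝ) = Real.sqrt (2.2^2) by rw [Real.sqrt_sq]; norm_num]
    exact Real.sqrt_le_sqrt (by norm_num)
  rw [div_le_div_iff₀ hden (by linarith)]
  have key : (3+lam) - ((1-lam)*Real.sqrt 5 + 2*Real.sqrt 2*lam) ≥ 0 := by
    nlinarith [mul_nonneg (sub_nonneg.2 hl1) (sub_nonneg.2 h5u),
      mul_nonneg hl0 (sub_nonneg.2 h2u)]
  have hmaj' : 0 ≤ n₂*(1+lam) - n₄*(1-lam) + lam*(n₁+n₃) := by linarith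
  nlinarith [mul_nonneg (add_nonneg h₁ h₃) key,
    mul_nonneg (Real.sqrt_nonneg 2) hmaj']
end

section
/- For all nonnegative reals n₁, n₂, n₃, n₄ and λ ∈ [0,1], if n₄(1−λ) − n₂(1+λ) > λ(n₁+n₃) and (n₁+n₃) + n₄√2 > 0, then ((n₁+n₃)√5 + (n₄+2n₂)√2)/((n₁+n₃) + n₄√2) < (3−λ)/(1+λ). -/
theorem stmt_6 (n₁ n₂ n₃ n₄ lam : ℝ)
    (h₁ : 0 ≤ n₁) (h₂ : 0 ≤ n₂) (h₃ : 0 ≤ n₃) (h₄ : 0 ≤ n₄)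
    (hl0 : 0 ≤ lam) (hl1 : lam ≤ 1)
    (hmaj : n₄ * (1 - lam) - n₂ * (1 + lam) > lam * (n₁ + n₃))
    (hden : (n₁ + n₃) + n₄ * Real.sqrt 2 > 0) :
    ((n₁ + n₃) * Real.sqrt 5 + (n₄ + 2 * n₂) * Real.sqrt 2) /
      ((n₁ + n₃) + n₄ * Real.sqrt 2) < (3 - lam) / (1 + lam) := by
  have s2 := Real.sq_sqrt (by norm_num : (2:ℝ) ≥ 0)
  have s5 := Real.sq_sqrt (by norm_num : (5:ℝ) ≥ 0)
  have b2 : Real.sqrt 2 < 1.42 := by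
    nlinarith [Real.sqrt_nonneg 2]
  have b2' : (1.41:ℝ) < Real.sqrt 2 := by
    nlinarith [Real.sqrt_nonneg 2]
  have b5 : Real.sqrt 5 < 2.24 := by
    nlinarith [Real.sqrt_nonneg 5]
  rw [div_lt_div_iff₀ hden (by linarith : (0:ℝ) < 1 + lam)]
  nlinarith [mul_nonneg hl0 (add_nonneg h₁ h₃), mul_nonneg h₂ hl0,
    mul_nonneg h₄ hl0, Real.sqrt_nonneg 2, Real.sqrt_nonneg 5,
    mul_pos (sub_pos.2 b2') (sub_pos.2 b5)]
end

section
/- Fix c with 0 < c ≤ 2 and an integer-valued threshold k₀ ≥ 2n/(2+c) with k₀ < n. For each ε > 0, the configuration of k₀ points at 0 and n−k₀ points at 1/2+ε satisfies (∑ᵢ (1−xᵢ))/(∑ᵢ xᵢ) = ((n+k₀)/2 − ε(n−k₀))/((n−k₀)/2 + ε(n−k₀)), and the limit of this ratio as ε → 0⁺ is at least 1 + 4/c. -/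
open Filter Topology

theorem stmt_15 (c : ℝ) (hc0 : 0 < c) (hc2 : c ≤ 2) (n k₀ : ℕ)
    (hk₀ : (k₀ : ℝ) ≥ 2 * n / (2 + c)) (hkn : k₀ < n) :
    (∀ ε : ℝ, 0 < ε →
      ((k₀ : ℝ) * 1 + ((n : ℝ) - k₀) * (1 / 2 - ε)) /
        (((n : ℝ) - k₀) * (1 / 2 + ε))
        = (((n : ℝ) + k₀) / 2 - ε * ((n : ℝ) - k₀)) /
          (((n : ℝ) - k₀) / 2 + ε * ((n : ℝ) - k₀))) ∧
    Tendsto (fun ε : ℝ =>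
        (((n : ℝ) + k₀) / 2 - ε * ((n : ℝ) - k₀)) /
          (((n : ℝ) - k₀) / 2 + ε * ((n : ℝ) - k₀)))
      (𝓝[>] 0) (𝓝 (((n : ℝ) + k₀) / ((n : ℝ) - k₀))) ∧
    ((n : ℝ) + k₀) / ((n : ℝ) - k₀) ≥ 1 + 4 / c := by
  have hnk : (0 : ℝ) < (n : ℝ) - k₀ := by
    have := hkn
    push_cast
    have : (k₀ : ℝ) < n := by exact_mod_cast hkn
    linarith
  refine ⟨fun ε hε => by congr 1 <;> ring, ?_, ?_⟩
  · have h : Tendsto (fun ε : ℝ =>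
        (((n : ℝ) + k₀) / 2 - ε * ((n : ℝ) - k₀)) /
          (((n : ℝ) - k₀) / 2 + ε * ((n : ℝ) - k₀))) (𝓝 0)
        (𝓝 ((((n : ℝ) + k₀) / 2 - 0 * ((n : ℝ) - k₀)) /
          (((n : ℝ) - k₀) / 2 + 0 * ((n : ℝ) - k₀)))) := by
      apply Tendsto.div
      · exact (tendsto_const_nhds.sub (tendsto_id.mul tendsto_const_nhds))
      · exact (tendsto_const_nhds.add (tendsto_id.mul tendsto_const_nhds))
      · simp; linarith
    have hval : (((n : ℝ) + k₀) / 2 - 0 * ((n : ℝ) - k₀)) /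
          (((n : ℝ) - k₀) / 2 + 0 * ((n : ℝ) - k₀))
        = ((n : ℝ) + k₀) / ((n : ℝ) - k₀) := by
      rw [zero_mul, sub_zero, add_zero]
      field_simp
    rw [hval] at h
    exact h.mono_left nhdsWithin_le_nhds
  · have h2c : (0:ℝ) < 2 + c := by linarith
    rw [ge_iff_le, div_le_iff₀ h2c] at hk₀
    rw [ge_iff_le, le_div_iff₀ hnk]
    have h4 : 4 / c * c = 4 := div_mul_cancel₀ 4 hc0.ne'
    nlinarith [mul_pos hnk hc0, div_nonneg (by norm_num : (0:ℝ) ≤ 4) hc0.le]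
end
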